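/- In an AL-monoid, a*b + b*c = (a∧c)*b + b*(a∨c) for all a,b,c. -/
import Mathlib


/-- An Autometrized lattice ordered monoid (AL-monoid). -/
class ALMonoid (A : Type*) extends Lattice A, AddCommMonoid A where
  amul : A → A → A
  add_le_add_left' : ∀ a b : A, a ≤ b → ∀ c : A, c + a ≤ c + b
  amul_core : ∀ a b : A, amul a (a ⊓ b) + b = a ⊔ b
  add_contract : ∀ a x y : A, amul (a + x) (a + y) ≤ amul x y
  sup_contract : ∀ a x y : A, amul (a ⊔ x) (a ⊔ y) ≤ amul x y
  inf_contract : ∀ a x y : A, amul (a ⊓ x) (a ⊓ y) ≤ amul x y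
  amul_contract : ∀ a x y : A, amul (amul a x) (amul a y) ≤ amul x y
  inf_amul_sup : ∀ a b : A, amul a (a ⊔ b) ⊓ amul b (a ⊔ b) = 0
  amul_nonneg : ∀ a b : A, 0 ≤ amul a b
  amul_eq_zero_iff : ∀ a b : A, amul a b = 0 ↔ a = b
  amul_comm : ∀ a b : A, amul a b = amul b a
  amul_triangle : ∀ a b c : A, amul a b ≤ amul a c + amul c b

open ALMonoid

infixl:70 " ⋆ " => ALMonoid.amul

section Aux
variable {A : Type*} [ALMonoid A]

lemma al_add_le_add {a b c d : A} (h1 : a ≤ b) (h2 : c ≤ d) : a + c ≤ b + d := by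
  calc a + c ≤ a + d := add_le_add_left' c d h2 a
    _ = d + a := add_comm _ _
    _ ≤ d + b := add_le_add_left' a b h1 d
    _ = b + d := add_comm _ _

/-- d(a, a⊓b) = d(a⊔b, b). -/
lemma al_L2 (a b : A) : a ⋆ (a ⊓ b) = (a ⊔ b) ⋆ b := by
  apply le_antisymm
  · have h := inf_contract a (a ⊔ b) b
    rwa [inf_sup_self] at h
  · have h := sup_contract b a (a ⊓ b)
    rwa [inf_comm a b, sup_inf_self, sup_comm b a, inf_comm b a] at h

/-- Translation distributes over ⊓. -/
lemma al_add_inf (a x y : A) : a + (x ⊓ y) = (a + x) ⊓ (a + y) := by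
  set z := a + (x ⊓ y) with hz
  set w := (a + x) ⊓ (a + y) with hw
  have hzx : z ≤ a + x := add_le_add_left' _ _ inf_le_left a
  have hzy : z ≤ a + y := add_le_add_left' _ _ inf_le_right a
  have hzw : z ≤ w := le_inf hzx hzy
  have h1 : w ⋆ z ≤ y ⋆ (x ⊓ y) := by
    have h := inf_contract (a + x) (a + y) z
    rw [inf_eq_right.mpr hzx] at h
    exact h.trans (add_contract a y (x ⊓ y))
  have h2 : w ⋆ z ≤ x ⋆ (x ⊓ y) := by
    have h := inf_contract (a + y) (a + x) z
    rw [inf_eq_right.mpr hzy, inf_comm (a + y) (a + x)] at h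
    exact h.trans (add_contract a x (x ⊓ y))
  have hx : x ⋆ (x ⊓ y) = y ⋆ (x ⊔ y) := by
    rw [al_L2 x y, amul_comm]
  have hy : y ⋆ (x ⊓ y) = x ⋆ (x ⊔ y) := by
    rw [inf_comm x y, al_L2 y x, sup_comm y x, amul_comm]
  have h0 : w ⋆ z ≤ 0 := by
    rw [← inf_amul_sup x y]
    exact le_inf (h1.trans_eq hy) (h2.trans_eq hx)
  have : w ⋆ z = 0 := le_antisymm h0 (amul_nonneg w z)
  exact ((amul_eq_zero_iff w z).mp this).symm

lemma al_squeeze {u v w₁ w₂ : A} (h1 : u ≤ v + w₁) (h2 : u ≤ v + w₂)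
    (hd : w₁ ⊓ w₂ = 0) : u ≤ v := by
  have : u ≤ (v + w₁) ⊓ (v + w₂) := le_inf h1 h2
  rwa [← al_add_inf, hd, add_zero] at this

end Aux

theorem stmt7 {A : Type*} [ALMonoid A]
    (hdisj : ∀ x u v : A, x ⊓ u = 0 → x ⊓ v = 0 → x ⊓ (u + v) = 0)
    (a b c : A) :
    a ⋆ b + b ⋆ c = (a ⊓ c) ⋆ b + b ⋆ (a ⊔ c) := by
  set j := a ⊔ c with hj
  set m := a ⊓ c with hm
  set e₁ := a ⋆ j with he₁
  set e₂ := c ⋆ j with he₂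
  have he : e₁ ⊓ e₂ = 0 := inf_amul_sup a c
  have he' : e₂ ⊓ e₁ = 0 := by rw [inf_comm]; exact he
  -- d(a,m) = e₂ and d(c,m) = e₁
  have ham : a ⋆ m = e₂ := by
    rw [hm, al_L2 a c, he₂, hj, amul_comm]
  have hcm : c ⋆ m = e₁ := by
    rw [hm, inf_comm a c, al_L2 c a, sup_comm c a, he₁, hj, amul_comm]
  -- disjointness of doubled elements
  have h5 : e₂ ⊓ (e₁ + e₁) = 0 := hdisj e₂ e₁ e₁ he' he'
  have h5' : (e₁ + e₁) ⊓ e₂ = 0 := by rw [inf_comm]; exact h5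
  have hdd : (e₁ + e₁) ⊓ (e₂ + e₂) = 0 := hdisj _ e₂ e₂ h5' h5'
  set L := a ⋆ b + b ⋆ c with hL
  set R := m ⋆ b + b ⋆ j with hR
  have h1 : L ≤ R + (e₂ + e₂) := by
    have t1 : a ⋆ b ≤ e₂ + m ⋆ b := by
      have := amul_triangle a b m
      rwa [ham] at this
    have t2 : b ⋆ c ≤ b ⋆ j + e₂ := by
      have := amul_triangle b c j
      rwa [amul_comm j c] at this
    calc L ≤ (e₂ + m ⋆ b) + (b ⋆ j + e₂) := al_add_le_add t1 t2
      _ = R + (e₂ + e₂) := by rw [hR]; abel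
  have h2 : L ≤ R + (e₁ + e₁) := by
    have t1 : a ⋆ b ≤ e₁ + j ⋆ b := by
      have := amul_triangle a b j
      rwa [← he₁] at this
    have t2 : b ⋆ c ≤ b ⋆ m + e₁ := by
      have := amul_triangle b c m
      rwa [amul_comm m c, hcm] at this
      -- careful: triangle gives b⋆c ≤ b⋆m + m⋆c; m⋆c = c⋆m = e₁
    calc L ≤ (e₁ + j ⋆ b) + (b ⋆ m + e₁) := al_add_le_add t1 t2
      _ = (m ⋆ b + b ⋆ j) + (e₁ + e₁) := by
          rw [amul_comm j b, amul_comm b m]; abel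
      _ = R + (e₁ + e₁) := by rw [hR]
  have h3 : R ≤ L + (e₂ + e₂) := by
    have t1 : m ⋆ b ≤ e₂ + a ⋆ b := by
      have := amul_triangle m b a
      rwa [amul_comm m a, ham] at this
    have t2 : b ⋆ j ≤ b ⋆ c + e₂ := by
      have := amul_triangle b j c
      rwa [← he₂] at this
    calc R ≤ (e₂ + a ⋆ b) + (b ⋆ c + e₂) := al_add_le_add t1 t2
      _ = L + (e₂ + e₂) := by rw [hL]; abel
  have h4 : R ≤ L + (e₁ + e₁) := by
    have t1 : m ⋆ b ≤ e₁ + b ⋆ c := by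
      have := amul_triangle m b c
      rwa [amul_comm m c, hcm, amul_comm c b] at this
    have t2 : b ⋆ j ≤ a ⋆ b + e₁ := by
      have := amul_triangle b j a
      rwa [amul_comm b a, ← he₁] at this
    calc R ≤ (e₁ + b ⋆ c) + (a ⋆ b + e₁) := al_add_le_add t1 t2
      _ = L + (e₁ + e₁) := by rw [hL]; abel
  have hLR : L ≤ R := al_squeeze h2 h1 hdd
  have hRL : R ≤ L := al_squeeze h4 h3 hdd
  exact le_antisymm hLR hRL
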